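/- arXiv:2510.23069 — 5 statements merged into one kernel-verified Lean document; each statement's English description precedes it below -/
import Mathlib

section
/- Under the stated setting, the discrete signed measure with nodes X and weights w = D V m is exact on P_n for μ: for every d-variate polynomial p of total degree at most n, ∫_Ω p dμ = Σ_{i=1}^M w_i p(x_i). -/
/-!
A quadrature rule `(X, u)` for `λ` exact on `P_{2n}` turns the `λ`-orthonormality of the
`p_j` into the discrete orthonormality `Vᵀ D V = I`. Hence `Vᵀ w = Vᵀ D V m = m`, i.e. the
weights `w` integrate every `p_j` exactly against `μ`, and by linearity every polynomial of
`P_n = span p_j`.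
-/

open MeasureTheory MvPolynomial

section

variable {σ ι κ : Type*} [Fintype ι] [Fintype κ]

theorem sum_weight_mul_eval_mul_eval_eq_integral [MeasurableSpace (σ → ℝ)]
    {lam : Measure (σ → ℝ)} {B : Set (σ → ℝ)} {n : ℕ} {X : ι → σ → ℝ} {u : ι → ℝ}
    (hquad : ∀ q : MvPolynomial σ ℝ, q.totalDegree ≤ 2 * n →
      ∫ x in B, eval x q ∂lam = ∑ i, u i * eval (X i) q)
    {f g : MvPolynomial σ ℝ} (hf : f.totalDegree ≤ n) (hg : g.totalDegree ≤ n) :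
    ∑ i, u i * (eval (X i) f * eval (X i) g) = ∫ x in B, eval x f * eval x g ∂lam := by
  have hfg : (f * g).totalDegree ≤ 2 * n :=
    (totalDegree_mul f g).trans (by omega)
  simpa only [map_mul] using (hquad (f * g) hfg).symm

theorem sum_weight_mul_sum_mul_eq_of_orthonormal [DecidableEq κ] (V : ι → κ → ℝ) (u : ι → ℝ)
    (m : κ → ℝ)
    (horth : ∀ j k, ∑ i, u i * (V i j * V i k) = if j = k then 1 else 0) (k : κ) :
    ∑ i, (u i * ∑ j, V i j * m j) * V i k = m k :=
  calc ∑ i, (u i * ∑ j, V i j * m j) * V i k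
      = ∑ j, m j * ∑ i, u i * (V i j * V i k) := by
        simp only [Finset.mul_sum, Finset.sum_mul]
        rw [Finset.sum_comm]
        exact Finset.sum_congr rfl fun j _ => Finset.sum_congr rfl fun i _ => by ring
    _ = m k := by simp [horth]

theorem integral_eval_sum_smul [MeasurableSpace (σ → ℝ)] {μ : Measure (σ → ℝ)}
    {Ω : Set (σ → ℝ)} {p : κ → MvPolynomial σ ℝ}
    (hint : ∀ j, IntegrableOn (fun x => eval x (p j)) Ω μ) (c : κ → ℝ) :
    ∫ x in Ω, eval x (∑ j, c j • p j) ∂μ = ∑ j, c j * ∫ x in Ω, eval x (p j) ∂μ := by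
  simp only [map_sum, smul_eval]
  rw [integral_finsetSum _ fun j _ => (hint j).const_mul (c j)]
  simp only [integral_const_mul]

theorem sum_mul_eval_sum_smul (X : ι → σ → ℝ) (w : ι → ℝ) (p : κ → MvPolynomial σ ℝ)
    (c : κ → ℝ) :
    ∑ i, w i * eval (X i) (∑ j, c j • p j) = ∑ j, c j * ∑ i, w i * eval (X i) (p j) := by
  simp only [map_sum, smul_eval, Finset.mul_sum]
  rw [Finset.sum_comm]
  exact Finset.sum_congr rfl fun j _ => Finset.sum_congr rfl fun i _ => by ring

end

theorem cheap_rule_exactness_general {d n M N : ℕ}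
    (μ lam : Measure (Fin d → ℝ))
    (Ω B : Set (Fin d → ℝ))
    (p : Fin N → MvPolynomial (Fin d) ℝ)
    (hdeg : ∀ j, (p j).totalDegree ≤ n)
    (horth : ∀ h k, ∫ x in B, eval x (p h) * eval x (p k) ∂lam
      = if h = k then 1 else 0)
    (hbasis : ∀ q : MvPolynomial (Fin d) ℝ, q.totalDegree ≤ n →
      ∃ c : Fin N → ℝ, q = ∑ j, c j • p j)
    (X : Fin M → (Fin d → ℝ)) (u : Fin M → ℝ)
    (hquad : ∀ q : MvPolynomial (Fin d) ℝ, q.totalDegree ≤ 2 * n →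
      ∫ x in B, eval x q ∂lam = ∑ i, u i * eval (X i) q)
    (hint : ∀ j, IntegrableOn (fun x => eval x (p j)) Ω μ)
    (m : Fin N → ℝ) (hm : ∀ j, m j = ∫ x in Ω, eval x (p j) ∂μ)
    (w : Fin M → ℝ) (hw : ∀ i, w i = u i * ∑ j, eval (X i) (p j) * m j) :
    ∀ q : MvPolynomial (Fin d) ℝ, q.totalDegree ≤ n →
      ∫ x in Ω, eval x q ∂μ = ∑ i, w i * eval (X i) q := by
  intro q hq
  obtain ⟨c, rfl⟩ := hbasis q hq
  have hdiscrete_orth (j k : Fin N) :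
      ∑ i, u i * (eval (X i) (p j) * eval (X i) (p k)) = if j = k then 1 else 0 := by
    rw [sum_weight_mul_eval_mul_eval_eq_integral hquad (hdeg j) (hdeg k), horth]
  have hexact (k : Fin N) : ∑ i, w i * eval (X i) (p k) = m k := by
    simp only [hw]
    exact sum_weight_mul_sum_mul_eq_of_orthonormal (fun i j => eval (X i) (p j)) u m
      hdiscrete_orth k
  rw [integral_eval_sum_smul hint, sum_mul_eval_sum_smul]
  simp only [hexact, hm]

/-- Theorem 2.1 (exactness part): under the stated setting, the discrete signed
measure with nodes `X` and weights `w = D V m` is exact on `P_n` for `μ`. -/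
theorem cheap_rule_exactness {d n M N : ℕ} (hMN : N ≤ M)
    (hN : N = Nat.choose (n + d) d)
    (μ lam : Measure (Fin d → ℝ)) [IsFiniteMeasure μ] [IsFiniteMeasure lam]
    (Ω B : Set (Fin d → ℝ))
    (p : Fin N → MvPolynomial (Fin d) ℝ)
    (hdeg : ∀ j, (p j).totalDegree ≤ n)
    (horth : ∀ h k, ∫ x in B, eval x (p h) * eval x (p k) ∂lam
      = if h = k then 1 else 0)
    (hbasis : ∀ q : MvPolynomial (Fin d) ℝ, q.totalDegree ≤ n →
      ∃ c : Fin N → ℝ, q = ∑ j, c j • p j)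
    (X : Fin M → (Fin d → ℝ)) (u : Fin M → ℝ)
    (hX : ∀ i, X i ∈ B) (hu : ∀ i, 0 < u i)
    (hquad : ∀ q : MvPolynomial (Fin d) ℝ, q.totalDegree ≤ 2 * n →
      ∫ x in B, eval x q ∂lam = ∑ i, u i * eval (X i) q)
    (hint : ∀ j, IntegrableOn (fun x => eval x (p j)) Ω μ)
    (m : Fin N → ℝ) (hm : ∀ j, m j = ∫ x in Ω, eval x (p j) ∂μ)
    (w : Fin M → ℝ) (hw : ∀ i, w i = u i * ∑ j, eval (X i) (p j) * m j) :
    ∀ q : MvPolynomial (Fin d) ℝ, q.totalDegree ≤ n →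
      ∫ x in Ω, eval x q ∂μ = ∑ i, w i * eval (X i) q :=
  cheap_rule_exactness_general μ lam Ω B p hdeg horth hbasis X u hquad hint m hm w hw
end

section
/- Under the stated setting, the weight vector w = D V m satisfies the 1-norm bound ‖w‖₁ = Σ_{i=1}^M |w_i| ≤ √(λ(B)) · ‖m‖₂, where ‖m‖₂ = (Σ_{j=1}^N m_j²)^{1/2}. -/
/-! Since the weights are positive, weighted Cauchy–Schwarz gives
`∑ u_i |(Vm)_i| ≤ √(∑ u_i) · √(∑ u_i (Vm)_i²)`. Exactness on `P_{2n}` yields `∑ u_i = λ(B)` (take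
`q = 1`) and makes the `p_j` orthonormal for the discrete measure `∑ u_i δ_{x_i}` (take `q = p_h p_k`),
so `∑ u_i (Vm)_i² = ‖m‖₂²`. -/

open MeasureTheory MvPolynomial Finset

section WeightedSums

variable {ι κ : Type*} [Fintype ι] [Fintype κ]

theorem sum_mul_abs_le_sqrt_sum_mul_sqrt_sum_mul_sq {u : ι → ℝ} (hu : ∀ i, 0 ≤ u i) (f : ι → ℝ) :
    ∑ i, u i * |f i| ≤ √(∑ i, u i) * √(∑ i, u i * f i ^ 2) := by
  have hterm : ∀ i, u i * |f i| = √(u i) * √(u i * f i ^ 2) := fun i => by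
    rw [Real.sqrt_mul (hu i), Real.sqrt_sq_eq_abs, ← mul_assoc, Real.mul_self_sqrt (hu i)]
  simp only [hterm]
  exact Real.sum_sqrt_mul_sqrt_le univ hu fun i => mul_nonneg (hu i) (sq_nonneg _)

theorem sum_mul_sq_sum_mul_eq_sum_sq [DecidableEq κ] {u : ι → ℝ} {φ : κ → ι → ℝ}
    (horth : ∀ h k, ∑ i, u i * (φ h i * φ k i) = if h = k then 1 else 0) (c : κ → ℝ) :
    ∑ i, u i * (∑ j, φ j i * c j) ^ 2 = ∑ j, c j ^ 2 :=
  calc ∑ i, u i * (∑ j, φ j i * c j) ^ 2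
      = ∑ i, ∑ h, ∑ k, c h * c k * (u i * (φ h i * φ k i)) := sum_congr rfl fun i _ => by
        rw [sq, sum_mul_sum, mul_sum]
        exact sum_congr rfl fun h _ => by rw [mul_sum]; exact sum_congr rfl fun k _ => by ring
    _ = ∑ h, ∑ k, c h * c k * ∑ i, u i * (φ h i * φ k i) := by
        simp only [mul_sum]
        rw [sum_comm]
        exact sum_congr rfl fun h _ => sum_comm
    _ = ∑ j, c j ^ 2 := by simp [horth, sq]

end WeightedSums

section Quadrature

variable {σ ι : Type*} [Fintype ι] {lam : Measure (σ → ℝ)} {B : Set (σ → ℝ)}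
  {X : ι → σ → ℝ} {u : ι → ℝ} {k : ℕ}

theorem sum_weights_eq_measureReal
    (hquad : ∀ q : MvPolynomial σ ℝ, q.totalDegree ≤ k →
      ∫ x in B, eval x q ∂lam = ∑ i, u i * eval (X i) q) :
    ∑ i, u i = lam.real B := by
  simpa using (hquad 1 (by simp)).symm

theorem sum_weights_mul_eval_mul_eval
    (hquad : ∀ q : MvPolynomial σ ℝ, q.totalDegree ≤ k →
      ∫ x in B, eval x q ∂lam = ∑ i, u i * eval (X i) q)
    {p q : MvPolynomial σ ℝ} (hpq : p.totalDegree + q.totalDegree ≤ k) :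
    ∑ i, u i * (eval (X i) p * eval (X i) q) = ∫ x in B, eval x p * eval x q ∂lam := by
  simpa using (hquad (p * q) ((totalDegree_mul p q).trans hpq)).symm

end Quadrature

theorem cheap_rule_weights_one_norm_bound_general {d n M N : ℕ}
    (lam : Measure (Fin d → ℝ))
    (B : Set (Fin d → ℝ))
    (p : Fin N → MvPolynomial (Fin d) ℝ)
    (hdeg : ∀ j, (p j).totalDegree ≤ n)
    (horth : ∀ h k, ∫ x in B, eval x (p h) * eval x (p k) ∂lam
      = if h = k then 1 else 0)
    (X : Fin M → (Fin d → ℝ)) (u : Fin M → ℝ)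
    (hu : ∀ i, 0 < u i)
    (hquad : ∀ q : MvPolynomial (Fin d) ℝ, q.totalDegree ≤ 2 * n →
      ∫ x in B, eval x q ∂lam = ∑ i, u i * eval (X i) q)
    (m : Fin N → ℝ)
    (w : Fin M → ℝ) (hw : ∀ i, w i = u i * ∑ j, eval (X i) (p j) * m j) :
    ∑ i, |w i| ≤ Real.sqrt (lam B).toReal * Real.sqrt (∑ j, (m j) ^ 2) := by
  have hnodes_orth : ∀ h k, ∑ i, u i * (eval (X i) (p h) * eval (X i) (p k))
      = if h = k then 1 else 0 := fun h k => by
    rw [sum_weights_mul_eval_mul_eval hquad (by linarith [hdeg h, hdeg k]), horth]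
  calc ∑ i, |w i| = ∑ i, u i * |∑ j, eval (X i) (p j) * m j| := by
        simp only [hw, abs_mul, abs_of_pos (hu _)]
    _ ≤ √(∑ i, u i) * √(∑ i, u i * (∑ j, eval (X i) (p j) * m j) ^ 2) :=
        sum_mul_abs_le_sqrt_sum_mul_sqrt_sum_mul_sq (fun i => (hu i).le) _
    _ = √(lam B).toReal * √(∑ j, m j ^ 2) := by
        rw [sum_weights_eq_measureReal hquad,
          sum_mul_sq_sum_mul_eq_sum_sq (φ := fun j i => eval (X i) (p j)) hnodes_orth]
        rfl

/-- Theorem 2.1 (stability part): the weight vector `w = D V m` satisfies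
`‖w‖₁ ≤ √(λ(B)) ‖m‖₂`. -/
theorem cheap_rule_weights_one_norm_bound {d n M N : ℕ} (hMN : N ≤ M)
    (hN : N = Nat.choose (n + d) d)
    (μ lam : Measure (Fin d → ℝ)) [IsFiniteMeasure μ] [IsFiniteMeasure lam]
    (Ω B : Set (Fin d → ℝ))
    (p : Fin N → MvPolynomial (Fin d) ℝ)
    (hdeg : ∀ j, (p j).totalDegree ≤ n)
    (horth : ∀ h k, ∫ x in B, eval x (p h) * eval x (p k) ∂lam
      = if h = k then 1 else 0)
    (X : Fin M → (Fin d → ℝ)) (u : Fin M → ℝ)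
    (hX : ∀ i, X i ∈ B) (hu : ∀ i, 0 < u i)
    (hquad : ∀ q : MvPolynomial (Fin d) ℝ, q.totalDegree ≤ 2 * n →
      ∫ x in B, eval x q ∂lam = ∑ i, u i * eval (X i) q)
    (m : Fin N → ℝ) (hm : ∀ j, m j = ∫ x in Ω, eval x (p j) ∂μ)
    (w : Fin M → ℝ) (hw : ∀ i, w i = u i * ∑ j, eval (X i) (p j) * m j) :
    ∑ i, |w i| ≤ Real.sqrt (lam B).toReal * Real.sqrt (∑ j, (m j) ^ 2) :=
  cheap_rule_weights_one_norm_bound_general lam B p hdeg horth X u hu hquad m w hw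
end

section
/- Under the stated setting, the vector w = D V m is a solution of the underdetermined moment system V^t w = m; explicitly, Σ_{i=1}^M w_i p_j(x_i) = m_j for every 1 ≤ j ≤ N. -/
/-!
Exactness of the quadrature on `P_{2n}` applied to the products `p_k p_j` turns the
`λ`-orthonormality of the basis into the discrete identity `Vᵀ D V = I`. Hence
`Vᵀ (D V m) = (Vᵀ D V) m = m`.
-/

open MeasureTheory MvPolynomial
open scoped Matrix

namespace Matrix

variable {κ ι R : Type*} [Fintype κ] [Fintype ι] [DecidableEq ι] [CommSemiring R]

theorem transpose_mulVec_diagonal_mulVec_mulVec {V : Matrix κ ι R} {D : Matrix κ κ R}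
    (hV : Vᵀ * D * V = 1) (m : ι → R) : Vᵀ *ᵥ (D *ᵥ (V *ᵥ m)) = m := by
  rw [mulVec_mulVec, mulVec_mulVec, hV, one_mulVec]

end Matrix

section Quadrature

variable {σ ι κ : Type*} [Fintype κ] [DecidableEq κ] [DecidableEq ι]
  [MeasurableSpace (σ → ℝ)] {lam : Measure (σ → ℝ)} {B : Set (σ → ℝ)} {n : ℕ}
  {p : ι → MvPolynomial σ ℝ} {X : κ → σ → ℝ} {u : κ → ℝ}

noncomputable def vandermondeLike (X : κ → σ → ℝ) (p : ι → MvPolynomial σ ℝ) :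
    Matrix κ ι ℝ :=
  Matrix.of fun i j => eval (X i) (p j)

theorem transpose_mul_diagonal_mul_vandermondeLike_eq_one
    (hdeg : ∀ j, (p j).totalDegree ≤ n)
    (horth : ∀ h k, ∫ x in B, eval x (p h) * eval x (p k) ∂lam = if h = k then 1 else 0)
    (hquad : ∀ q : MvPolynomial σ ℝ, q.totalDegree ≤ 2 * n →
      ∫ x in B, eval x q ∂lam = ∑ i, u i * eval (X i) q) :
    (vandermondeLike X p)ᵀ * Matrix.diagonal u * vandermondeLike X p = 1 := by
  ext h k
  have hdeg_mul : (p h * p k).totalDegree ≤ 2 * n :=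
    calc (p h * p k).totalDegree ≤ (p h).totalDegree + (p k).totalDegree := totalDegree_mul _ _
      _ ≤ 2 * n := by rw [two_mul]; exact add_le_add (hdeg h) (hdeg k)
  have hdiscrete := hquad _ hdeg_mul
  simp only [eval_mul, horth] at hdiscrete
  rw [Matrix.one_apply, hdiscrete, Matrix.mul_apply]
  simp only [Matrix.mul_diagonal, Matrix.transpose_apply, vandermondeLike, Matrix.of_apply]
  exact Finset.sum_congr rfl fun i _ => by ring

end Quadrature

theorem cheap_rule_moment_matching_general {d n M N : ℕ}
    (lam : Measure (Fin d → ℝ))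
    (B : Set (Fin d → ℝ))
    (p : Fin N → MvPolynomial (Fin d) ℝ)
    (hdeg : ∀ j, (p j).totalDegree ≤ n)
    (horth : ∀ h k, ∫ x in B, eval x (p h) * eval x (p k) ∂lam
      = if h = k then 1 else 0)
    (X : Fin M → (Fin d → ℝ)) (u : Fin M → ℝ)
    (hquad : ∀ q : MvPolynomial (Fin d) ℝ, q.totalDegree ≤ 2 * n →
      ∫ x in B, eval x q ∂lam = ∑ i, u i * eval (X i) q)
    (m : Fin N → ℝ)
    (w : Fin M → ℝ) (hw : ∀ i, w i = u i * ∑ j, eval (X i) (p j) * m j) :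
    ∀ j, ∑ i, w i * eval (X i) (p j) = m j := by
  set V := vandermondeLike X p
  have hw_eq : w = Matrix.diagonal u *ᵥ (V *ᵥ m) := by
    ext i
    rw [Matrix.mulVec_diagonal, hw]
    simp only [V, vandermondeLike, Matrix.mulVec, dotProduct, Matrix.of_apply]
  have hmoment := Matrix.transpose_mulVec_diagonal_mulVec_mulVec
    (transpose_mul_diagonal_mul_vandermondeLike_eq_one hdeg horth hquad) m
  intro j
  rw [← hw_eq] at hmoment
  rw [← congrFun hmoment j]
  simp only [Matrix.mulVec, dotProduct, Matrix.transpose_apply, vandermondeLike,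
    Matrix.of_apply, mul_comm]

/-- `w = D V m` solves the underdetermined moment system `Vᵀ w = m`:
`Σ_i w_i p_j(x_i) = m_j` for every `j`. -/
theorem cheap_rule_moment_matching {d n M N : ℕ} (hMN : N ≤ M)
    (hN : N = Nat.choose (n + d) d)
    (μ lam : Measure (Fin d → ℝ)) [IsFiniteMeasure μ] [IsFiniteMeasure lam]
    (Ω B : Set (Fin d → ℝ))
    (p : Fin N → MvPolynomial (Fin d) ℝ)
    (hdeg : ∀ j, (p j).totalDegree ≤ n)
    (horth : ∀ h k, ∫ x in B, eval x (p h) * eval x (p k) ∂lam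
      = if h = k then 1 else 0)
    (X : Fin M → (Fin d → ℝ)) (u : Fin M → ℝ)
    (hX : ∀ i, X i ∈ B) (hu : ∀ i, 0 < u i)
    (hquad : ∀ q : MvPolynomial (Fin d) ℝ, q.totalDegree ≤ 2 * n →
      ∫ x in B, eval x q ∂lam = ∑ i, u i * eval (X i) q)
    (m : Fin N → ℝ) (hm : ∀ j, m j = ∫ x in Ω, eval x (p j) ∂μ)
    (w : Fin M → ℝ) (hw : ∀ i, w i = u i * ∑ j, eval (X i) (p j) * m j) :
    ∀ j, ∑ i, w i * eval (X i) (p j) = m j :=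
  cheap_rule_moment_matching_general lam B p hdeg horth X u hquad m w hw
end

section
/- Under the stated setting, if in addition Ω ⊆ B and B is bounded, then ‖w‖₁ ≤ √(λ(B)) · μ(Ω) · √(max_{x∈B} K_n(x,x)), where K_n(x,x) = Σ_{j=1}^N p_j(x)² is the Christoffel polynomial (reciprocal Christoffel function) of λ. -/
open MeasureTheory MvPolynomial

/-- Corollary (first bound): if `Ω ⊆ B` and `B` is bounded (hence compact),
then `‖w‖₁ ≤ √(λ(B)) · μ(Ω) · √(max_{x∈B} K_n(x,x))`, where
`K_n(x,x) = Σ_j p_j(x)²` is the Christoffel polynomial of `λ`. -/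
theorem cheap_rule_christoffel_bound {d n M N : ℕ} (hMN : N ≤ M)
    (hN : N = Nat.choose (n + d) d)
    (μ lam : Measure (Fin d → ℝ)) [IsFiniteMeasure μ] [IsFiniteMeasure lam]
    (Ω B : Set (Fin d → ℝ)) (hΩB : Ω ⊆ B) (hB : IsCompact B)
    (p : Fin N → MvPolynomial (Fin d) ℝ)
    (hdeg : ∀ j, (p j).totalDegree ≤ n)
    (horth : ∀ h k, ∫ x in B, eval x (p h) * eval x (p k) ∂lam
      = if h = k then 1 else 0)
    (X : Fin M → (Fin d → ℝ)) (u : Fin M → ℝ)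
    (hX : ∀ i, X i ∈ B) (hu : ∀ i, 0 < u i)
    (hquad : ∀ q : MvPolynomial (Fin d) ℝ, q.totalDegree ≤ 2 * n →
      ∫ x in B, eval x q ∂lam = ∑ i, u i * eval (X i) q)
    (m : Fin N → ℝ) (hm : ∀ j, m j = ∫ x in Ω, eval x (p j) ∂μ)
    (w : Fin M → ℝ) (hw : ∀ i, w i = u i * ∑ j, eval (X i) (p j) * m j) :
    ∑ i, |w i| ≤ Real.sqrt (lam B).toReal * (μ Ω).toReal *
      Real.sqrt (sSup ((fun x => ∑ j, (eval x (p j)) ^ 2) '' B)) := by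
  classical
  set K : (Fin d → ℝ) → ℝ := fun x => ∑ j, (eval x (p j)) ^ 2 with hKdef
  set S : ℝ := sSup (K '' B) with hSdef
  set T : ℝ := ∑ j, m j ^ 2 with hTdef
  set e : Fin M → ℝ := fun i => ∑ j, eval (X i) (p j) * m j with hedef
  have hNpos : 0 < N := hN ▸ Nat.choose_pos (Nat.le_add_left d n)
  have hMpos : 0 < M := lt_of_lt_of_le hNpos hMN
  let i0 : Fin M := ⟨0, hMpos⟩
  have hKcont : Continuous K := by
    apply continuous_finset_sum
    intro j _
    exact (MvPolynomial.continuous_eval (p j)).pow 2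
  have hKS : ∀ x ∈ B, K x ≤ S := fun x hx =>
    le_csSup (hB.image hKcont).bddAbove ⟨x, hx, rfl⟩
  have hK0 : ∀ x, 0 ≤ K x := fun x => Finset.sum_nonneg fun j _ => sq_nonneg _
  have hS0 : 0 ≤ S := le_trans (hK0 (X i0)) (hKS (X i0) (hX i0))
  have hT0 : 0 ≤ T := Finset.sum_nonneg fun j _ => sq_nonneg _
  -- sum of weights equals lam B
  have hsumu : ∑ i, u i = (lam B).toReal := by
    have h1 := hquad 1 (by simp)
    simp [MeasureTheory.setIntegral_const] at h1
    exact (by simpa using h1.symm : ∑ i, u i = lam.real B)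
  have hsumu0 : 0 ≤ ∑ i, u i := Finset.sum_nonneg fun i _ => (hu i).le
  -- discrete orthogonality
  have hquadjk : ∀ j k, ∑ i, u i * (eval (X i) (p j) * eval (X i) (p k))
      = if j = k then 1 else 0 := by
    intro j k
    have hdeg2 : (p j * p k).totalDegree ≤ 2 * n :=
      le_trans (totalDegree_mul _ _) (by have := hdeg j; have := hdeg k; omega)
    have hq := hquad (p j * p k) hdeg2
    simp only [eval_mul] at hq
    rw [← hq]
    exact horth j k
  -- step A : ∑ u i * e i ^ 2 = T
  have h2 : ∀ j k, (∑ i, u i * ((eval (X i) (p j) * m j) * (eval (X i) (p k) * m k)))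
      = m j * m k * (if j = k then 1 else 0) := by
    intro j k
    rw [← hquadjk j k, Finset.mul_sum]
    exact Finset.sum_congr rfl fun i _ => by ring
  have stepA : ∑ i, u i * e i ^ 2 = T := by
    have expand : ∀ i, u i * e i ^ 2
        = ∑ j, ∑ k, u i * ((eval (X i) (p j) * m j) * (eval (X i) (p k) * m k)) := by
      intro i
      show u i * (∑ j, eval (X i) (p j) * m j) ^ 2 = _
      rw [sq, Finset.sum_mul_sum, Finset.mul_sum]
      refine Finset.sum_congr rfl fun j _ => ?_
      rw [Finset.mul_sum]
    calc ∑ i, u i * e i ^ 2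
        = ∑ j, ∑ k, ∑ i, u i * ((eval (X i) (p j) * m j) * (eval (X i) (p k) * m k)) := by
          simp_rw [expand]
          rw [Finset.sum_comm]
          exact Finset.sum_congr rfl fun j _ => Finset.sum_comm
      _ = ∑ j, ∑ k, m j * m k * (if j = k then 1 else 0) := by
          simp_rw [h2]
      _ = T := by
          rw [hTdef]
          refine Finset.sum_congr rfl fun j _ => ?_
          simp [Finset.sum_ite_eq, sq]
  -- integrability on Ω
  have hint : ∀ j, IntegrableOn (fun x => eval x (p j)) Ω μ := by
    intro j
    exact ((MvPolynomial.continuous_eval (p j)).continuousOn.integrableOn_compact hB).mono_set hΩB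
  -- T as integral
  have hT : T = ∫ x in Ω, (∑ j, m j * eval x (p j)) ∂μ := by
    rw [integral_finset_sum _ (fun j _ => ((hint j).const_mul (m j)))]
    rw [hTdef]
    refine Finset.sum_congr rfl fun j _ => ?_
    rw [integral_const_mul, ← hm j, sq]
  -- pointwise bound on B
  have hf_bd : ∀ x ∈ B, |∑ j, m j * eval x (p j)| ≤ Real.sqrt S * Real.sqrt T := by
    intro x hx
    have hcs := Finset.sum_mul_sq_le_sq_mul_sq Finset.univ (fun j => m j)
      (fun j => eval x (p j))
    have h1 : (∑ j, m j * eval x (p j)) ^ 2 ≤ T * K x := hcs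
    have h2' : T * K x ≤ S * T := by
      calc T * K x ≤ T * S := mul_le_mul_of_nonneg_left (hKS x hx) hT0
        _ = S * T := mul_comm _ _
    have := Real.abs_le_sqrt (h1.trans h2')
    calc |∑ j, m j * eval x (p j)| ≤ Real.sqrt (S * T) := this
      _ = Real.sqrt S * Real.sqrt T := Real.sqrt_mul hS0 T
  -- a.e. bound on Ω
  have hae : ∀ᵐ x ∂(μ.restrict Ω), ‖∑ j, m j * eval x (p j)‖ ≤ Real.sqrt S * Real.sqrt T := by
    have hB' : ∀ᵐ x ∂(μ.restrict B), ‖∑ j, m j * eval x (p j)‖ ≤ Real.sqrt S * Real.sqrt T := by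
      filter_upwards [ae_restrict_mem hB.measurableSet] with x hx
      simpa [Real.norm_eq_abs] using hf_bd x hx
    exact hB'.filter_mono (MeasureTheory.ae_mono (Measure.restrict_mono hΩB le_rfl))
  -- bound on T
  have hTbound : T ≤ Real.sqrt S * Real.sqrt T * (μ Ω).toReal := by
    have hnorm := norm_integral_le_of_norm_le_const hae
    rw [Measure.real, Measure.restrict_apply_univ] at hnorm
    calc T ≤ ‖∫ x in Ω, (∑ j, m j * eval x (p j)) ∂μ‖ := by
          rw [← hT]; exact le_abs_self T
      _ ≤ Real.sqrt S * Real.sqrt T * (μ Ω).toReal := hnorm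
  -- step C : √T ≤ μ(Ω) * √S
  have stepC : Real.sqrt T ≤ (μ Ω).toReal * Real.sqrt S := by
    rcases eq_or_lt_of_le hT0 with h | h
    · rw [← h, Real.sqrt_zero]
      positivity
    · have hsT : 0 < Real.sqrt T := Real.sqrt_pos.mpr h
      have : Real.sqrt T * Real.sqrt T ≤ ((μ Ω).toReal * Real.sqrt S) * Real.sqrt T := by
        rw [Real.mul_self_sqrt hT0]
        calc T ≤ Real.sqrt S * Real.sqrt T * (μ Ω).toReal := hTbound
          _ = (μ Ω).toReal * Real.sqrt S * Real.sqrt T := by ring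
      exact le_of_mul_le_mul_right this hsT
  -- final Cauchy-Schwarz
  have hwabs : ∀ i, |w i| = u i * |e i| := by
    intro i
    rw [hw i, abs_mul, abs_of_pos (hu i)]
  have hcs2 : (∑ i, u i * |e i|) ^ 2 ≤ (∑ i, u i) * (∑ i, u i * e i ^ 2) := by
    have := Finset.sum_mul_sq_le_sq_mul_sq Finset.univ
      (fun i => Real.sqrt (u i)) (fun i => Real.sqrt (u i) * |e i|)
    have hl : ∀ i : Fin M, Real.sqrt (u i) * (Real.sqrt (u i) * |e i|) = u i * |e i| := by
      intro i
      rw [← mul_assoc, Real.mul_self_sqrt (hu i).le]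
    have hr1 : ∀ i : Fin M, Real.sqrt (u i) ^ 2 = u i := fun i => Real.sq_sqrt (hu i).le
    have hr2 : ∀ i : Fin M, (Real.sqrt (u i) * |e i|) ^ 2 = u i * e i ^ 2 := by
      intro i
      rw [mul_pow, Real.sq_sqrt (hu i).le, sq_abs]
    simpa only [hl, hr1, hr2] using this
  have hsum_nonneg : 0 ≤ ∑ i, u i * |e i| :=
    Finset.sum_nonneg fun i _ => mul_nonneg (hu i).le (abs_nonneg _)
  have key : ∑ i, u i * |e i| ≤ Real.sqrt ((lam B).toReal * T) := by
    apply Real.le_sqrt_of_sq_le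
    calc (∑ i, u i * |e i|) ^ 2 ≤ (∑ i, u i) * (∑ i, u i * e i ^ 2) := hcs2
      _ = (lam B).toReal * T := by rw [hsumu, stepA]
  calc ∑ i, |w i| = ∑ i, u i * |e i| := Finset.sum_congr rfl fun i _ => hwabs i
    _ ≤ Real.sqrt ((lam B).toReal * T) := key
    _ = Real.sqrt (lam B).toReal * Real.sqrt T := Real.sqrt_mul ENNReal.toReal_nonneg T
    _ ≤ Real.sqrt (lam B).toReal * ((μ Ω).toReal * Real.sqrt S) :=
        mul_le_mul_of_nonneg_left stepC (Real.sqrt_nonneg _)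
    _ = Real.sqrt (lam B).toReal * (μ Ω).toReal * Real.sqrt S := by ring
end

section
/- Under the stated setting, if in addition Ω ⊆ B, μ and λ are absolutely continuous with respect to Lebesgue measure with densities ω ∈ L¹(Ω) and σ ∈ L¹(B) (dμ = ω(x)dx, dλ = σ(x)dx), and ω²/σ ∈ L¹(Ω), then ‖w‖₁ ≤ √(λ(B)) · √(∫_Ω ω(x)²/σ(x) dx). -/
/-! With `f = 𝟙_Ω ω/σ` one has `dμ = f dλ`, so the moments `m_j = ∫ p_j f dλ` are the
coefficients of `f` in the `λ`-orthonormal basis `p_j`, and `w_i = u_i g(x_i)` for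
`g = ∑ m_j p_j`. Cauchy–Schwarz with the positive weights `u_i` gives
`‖w‖₁ ≤ √(∑ u_i) √(∑ u_i g(x_i)²)`. Exactness of the rule on `1` and on `g² ∈ P_{2n}` turns the
two sums into `λ(B)` and `∫ g² dλ = ∑ m_j²`, and Bessel's inequality bounds the latter by
`∫ f² dλ = ∫_Ω ω²/σ`. -/

open MeasureTheory MvPolynomial
open scoped ENNReal

section Density

variable {α : Type*} [MeasurableSpace α] {ν : Measure α} {ρ : α → ℝ}

lemma integral_withDensity_ofReal (hρ : Measurable ρ) (hρnn : ∀ x, 0 ≤ ρ x) (g : α → ℝ) :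
    ∫ x, g x ∂ν.withDensity (fun x => ENNReal.ofReal (ρ x)) = ∫ x, ρ x * g x ∂ν := by
  refine (integral_withDensity_eq_integral_smul hρ.real_toNNReal g).trans ?_
  simp [NNReal.smul_def, Real.coe_toNNReal _ (hρnn _)]

lemma integrable_withDensity_ofReal_iff (hρ : Measurable ρ) (hρnn : ∀ x, 0 ≤ ρ x) {g : α → ℝ} :
    Integrable g (ν.withDensity fun x => ENNReal.ofReal (ρ x)) ↔
      Integrable (fun x => ρ x * g x) ν := by
  refine (integrable_withDensity_iff_integrable_smul hρ.real_toNNReal).trans ?_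
  simp [NNReal.smul_def, Real.coe_toNNReal _ (hρnn _)]

lemma restrict_withDensity_restrict_self [SFinite ν] (s : Set α) (ρ : α → ℝ≥0∞) :
    ((ν.restrict s).withDensity ρ).restrict s = (ν.restrict s).withDensity ρ := by
  rw [restrict_withDensity', Measure.restrict_restrict_of_subset subset_rfl]

lemma withDensity_ofReal_indicator_div [SFinite ν] {Ω B : Set α} (hΩ : MeasurableSet Ω)
    (hΩB : Ω ⊆ B) {ω σ : α → ℝ} (hω : Measurable ω) (hσ : Measurable σ) (hσnn : ∀ x, 0 ≤ σ x)
    (hσ0 : ∀ᵐ x ∂ν.restrict Ω, ω x ≠ 0 → σ x ≠ 0) :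
    ((ν.restrict B).withDensity fun x => ENNReal.ofReal (σ x)).withDensity
        (fun x => ENNReal.ofReal (Ω.indicator (fun y => ω y / σ y) x))
      = (ν.restrict Ω).withDensity fun x => ENNReal.ofReal (ω x) := by
  have hρ : Measurable fun x => ENNReal.ofReal (Ω.indicator (fun y => ω y / σ y) x) :=
    ((hω.div hσ).indicator hΩ).ennreal_ofReal
  rw [← withDensity_mul _ hσ.ennreal_ofReal hρ,
    ← Measure.restrict_restrict_of_subset hΩB, ← withDensity_indicator hΩ]
  refine withDensity_congr_ae ?_
  -- `ω / σ` is the junk value `0` where `σ = 0`; by `hσ0`, `ω` vanishes there too.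
  have hcancel : ∀ᵐ x ∂ν.restrict B, x ∈ Ω → σ x * (ω x / σ x) = ω x :=
    ae_restrict_of_ae <| ((ae_restrict_iff' hΩ).1 hσ0).mono fun x hx hxΩ =>
      mul_div_cancel_of_imp' fun h => not_not.1 fun hω0 => hx hxΩ hω0 h
  filter_upwards [hcancel] with x hx
  by_cases hxΩ : x ∈ Ω
  · simp [hxΩ, ← ENNReal.ofReal_mul (hσnn x), hx hxΩ]
  · simp [hxΩ]

end Density

section Orthonormal

variable {α ι : Type*} [MeasurableSpace α] {ν : Measure α} [Fintype ι] [DecidableEq ι]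

lemma inner_toLp_eq_integral_mul {f g : α → ℝ} (hf : MemLp f 2 ν) (hg : MemLp g 2 ν) :
    inner ℝ (hf.toLp f) (hg.toLp g) = ∫ x, f x * g x ∂ν := by
  rw [L2.inner_def]
  refine integral_congr_ae ?_
  filter_upwards [hf.coeFn_toLp, hg.coeFn_toLp] with x hfx hgx
  simp [hfx, hgx, mul_comm]

lemma memLp_two_of_integral_mul_self_ne_zero {f : α → ℝ} (hf : AEStronglyMeasurable f ν)
    (h : ∫ x, f x * f x ∂ν ≠ 0) : MemLp f 2 ν :=
  (memLp_two_iff_integrable_sq hf).2 <| by simpa only [sq] using Integrable.of_integral_ne_zero h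

variable {e : ι → α → ℝ}

theorem sum_sq_integral_mul_le_integral_sq (he : ∀ i, MemLp (e i) 2 ν)
    (horth : ∀ i j, ∫ x, e i x * e j x ∂ν = if i = j then 1 else 0)
    {f : α → ℝ} (hf : MemLp f 2 ν) :
    ∑ i, (∫ x, f x * e i x ∂ν) ^ 2 ≤ ∫ x, f x ^ 2 ∂ν := by
  have hon : Orthonormal ℝ fun i => (he i).toLp (e i) := by
    rw [orthonormal_iff_ite]
    intro i j
    rw [inner_toLp_eq_integral_mul, horth]
  have bessel := hon.sum_inner_products_le (s := Finset.univ) (hf.toLp f)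
  simp only [← real_inner_self_eq_norm_sq, inner_toLp_eq_integral_mul, Real.norm_eq_abs,
    sq_abs] at bessel
  simpa only [mul_comm, sq] using bessel

theorem integral_sum_mul_sq (he : ∀ i, MemLp (e i) 2 ν)
    (horth : ∀ i j, ∫ x, e i x * e j x ∂ν = if i = j then 1 else 0) (a : ι → ℝ) :
    ∫ x, (∑ i, a i * e i x) ^ 2 ∂ν = ∑ i, a i ^ 2 := by
  have hint : ∀ i j, Integrable (fun x => a i * a j * (e i x * e j x)) ν :=
    fun i j => ((he i).integrable_mul (he j)).const_mul _
  have hexpand : ∀ x, (∑ i, a i * e i x) ^ 2 = ∑ i, ∑ j, a i * a j * (e i x * e j x) := by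
    intro x
    rw [sq, Finset.sum_mul_sum]
    simp only [mul_mul_mul_comm]
  simp_rw [hexpand]
  rw [integral_finsetSum _ fun i _ => integrable_finsetSum _ fun j _ => hint i j]
  simp_rw [integral_finsetSum _ fun j _ => hint _ j, integral_const_mul, horth]
  simp [sq]

theorem sum_sq_integral_le_integral_density {f : α → ℝ} (hf : Measurable f)
    (hfnn : ∀ x, 0 ≤ f x) (hint : Integrable f (ν.withDensity fun x => ENNReal.ofReal (f x)))
    (he : ∀ i, MemLp (e i) 2 ν)
    (horth : ∀ i j, ∫ x, e i x * e j x ∂ν = if i = j then 1 else 0) :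
    ∑ i, (∫ x, e i x ∂ν.withDensity fun x => ENNReal.ofReal (f x)) ^ 2 ≤
      ∫ x, f x ∂ν.withDensity fun x => ENNReal.ofReal (f x) := by
  rw [integrable_withDensity_ofReal_iff hf hfnn] at hint
  have hf2 : MemLp f 2 ν :=
    (memLp_two_iff_integrable_sq hf.aestronglyMeasurable).2 (by simpa only [sq] using hint)
  simp only [integral_withDensity_ofReal hf hfnn, ← sq]
  exact sum_sq_integral_mul_le_integral_sq he horth hf2

theorem sum_sq_integral_le_setIntegral_sq_div [SFinite ν] {Ω B : Set α} (hΩ : MeasurableSet Ω)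
    (hΩB : Ω ⊆ B) {ω σ : α → ℝ} (hω : Measurable ω) (hσ : Measurable σ) (hωnn : ∀ x, 0 ≤ ω x)
    (hσnn : ∀ x, 0 ≤ σ x) (hratio : IntegrableOn (fun x => ω x ^ 2 / σ x) Ω ν)
    (hσ0 : ∀ᵐ x ∂ν.restrict Ω, ω x ≠ 0 → σ x ≠ 0)
    (he : ∀ i, MemLp (e i) 2 ((ν.restrict B).withDensity fun x => ENNReal.ofReal (σ x)))
    (horth : ∀ i j, ∫ x, e i x * e j x ∂(ν.restrict B).withDensity
      (fun x => ENNReal.ofReal (σ x)) = if i = j then 1 else 0) :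
    ∑ i, (∫ x, e i x ∂(ν.restrict Ω).withDensity fun x => ENNReal.ofReal (ω x)) ^ 2 ≤
      ∫ x in Ω, ω x ^ 2 / σ x ∂ν := by
  set f := Ω.indicator fun x => ω x / σ x with hf_def
  have hf : Measurable f := (hω.div hσ).indicator hΩ
  have hfnn : ∀ x, 0 ≤ f x := Set.indicator_nonneg fun x _ => div_nonneg (hωnn x) (hσnn x)
  have hωf : ∀ x ∈ Ω, ω x * f x = ω x ^ 2 / σ x := fun x hx => by
    rw [hf_def, Set.indicator_of_mem hx]; ring
  have hf_integrable : Integrable f ((ν.restrict Ω).withDensity fun x => ENNReal.ofReal (ω x)) := by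
    rw [integrable_withDensity_ofReal_iff hω hωnn]
    exact hratio.congr_fun (fun x hx => (hωf x hx).symm) hΩ
  have hf_integral :
      ∫ x, f x ∂(ν.restrict Ω).withDensity (fun x => ENNReal.ofReal (ω x)) =
        ∫ x in Ω, ω x ^ 2 / σ x ∂ν := by
    rw [integral_withDensity_ofReal hω hωnn]; exact setIntegral_congr_fun hΩ hωf
  rw [← withDensity_ofReal_indicator_div hΩ hΩB hω hσ hσnn hσ0] at hf_integrable hf_integral ⊢
  exact hf_integral ▸ sum_sq_integral_le_integral_density hf hfnn hf_integrable he horth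

end Orthonormal

lemma sum_mul_abs_le_sqrt_mul_sqrt {ι : Type*} [Fintype ι] {u : ι → ℝ} (hu : ∀ i, 0 ≤ u i)
    (a : ι → ℝ) : ∑ i, u i * |a i| ≤ √(∑ i, u i) * √(∑ i, u i * a i ^ 2) := by
  rw [← Real.sqrt_mul (Finset.sum_nonneg fun i _ => hu i)]
  refine Real.le_sqrt_of_sq_le (Finset.sum_sq_le_sum_mul_sum_of_sq_le_mul _
    (fun i _ => hu i) (fun i _ => mul_nonneg (hu i) (sq_nonneg _)) fun i _ => ?_)
  rw [mul_pow, sq_abs, sq (u i), mul_assoc]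

lemma totalDegree_sum_C_mul_le {σ ι : Type*} [Fintype ι] {n : ℕ} {p : ι → MvPolynomial σ ℝ}
    (hp : ∀ i, (p i).totalDegree ≤ n) (a : ι → ℝ) : (∑ i, C (a i) * p i).totalDegree ≤ n :=
  (totalDegree_finsetSum _ _).trans <| Finset.sup_le fun i _ =>
    (totalDegree_mul _ _).trans <| by simpa [totalDegree_C] using hp i

theorem cheap_rule_density_bound_general {d n M N : ℕ}
    (Ω B : Set (Fin d → ℝ)) (hΩB : Ω ⊆ B)
    (hΩmeas : MeasurableSet Ω)
    (ω σ : (Fin d → ℝ) → ℝ) (hωmeas : Measurable ω) (hσmeas : Measurable σ)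
    (hωnn : ∀ x, 0 ≤ ω x) (hσnn : ∀ x, 0 ≤ σ x)
    (hratio : IntegrableOn (fun x => ω x ^ 2 / σ x) Ω)
    (hσ0 : ∀ᵐ x ∂(volume.restrict Ω), ω x ≠ 0 → σ x ≠ 0)
    (μ lam : Measure (Fin d → ℝ))
    (hμ : μ = (volume.restrict Ω).withDensity fun x => ENNReal.ofReal (ω x))
    (hlam : lam = (volume.restrict B).withDensity fun x => ENNReal.ofReal (σ x))
    (p : Fin N → MvPolynomial (Fin d) ℝ)
    (hdeg : ∀ j, (p j).totalDegree ≤ n)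
    (horth : ∀ h k, ∫ x in B, eval x (p h) * eval x (p k) ∂lam
      = if h = k then 1 else 0)
    (X : Fin M → (Fin d → ℝ)) (u : Fin M → ℝ)
    (hu : ∀ i, 0 < u i)
    (hquad : ∀ q : MvPolynomial (Fin d) ℝ, q.totalDegree ≤ 2 * n →
      ∫ x in B, eval x q ∂lam = ∑ i, u i * eval (X i) q)
    (m : Fin N → ℝ) (hm : ∀ j, m j = ∫ x in Ω, eval x (p j) ∂μ)
    (w : Fin M → ℝ) (hw : ∀ i, w i = u i * ∑ j, eval (X i) (p j) * m j) :
    ∑ i, |w i| ≤ Real.sqrt (lam B).toReal *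
      Real.sqrt (∫ x in Ω, ω x ^ 2 / σ x) := by
  have hlamB : lam.restrict B = lam := by rw [hlam, restrict_withDensity_restrict_self]
  rw [hlamB] at horth
  have hp : ∀ j, MemLp (fun x => eval x (p j)) 2 lam := fun j =>
    memLp_two_of_integral_mul_self_ne_zero (continuous_eval _).aestronglyMeasurable
      (by simp [horth])
  have hbessel : ∑ j, m j ^ 2 ≤ ∫ x in Ω, ω x ^ 2 / σ x := by
    rw [hlam] at hp horth
    simpa only [hm, hμ, restrict_withDensity_restrict_self] using
      sum_sq_integral_le_setIntegral_sq_div hΩmeas hΩB hωmeas hσmeas hωnn hσnn hratio hσ0 hp horth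
  set g := fun x => ∑ j, m j * eval x (p j) with hg_def
  have hquad_g : ∑ i, u i * g (X i) ^ 2 = ∑ j, m j ^ 2 := by
    have hdeg_sq : ((∑ j, C (m j) * p j) ^ 2).totalDegree ≤ 2 * n :=
      (totalDegree_pow _ 2).trans (Nat.mul_le_mul_left 2 (totalDegree_sum_C_mul_le hdeg m))
    have := hquad _ hdeg_sq
    simp only [hlamB, map_pow, map_sum, map_mul, eval_C] at this
    rw [← integral_sum_mul_sq hp horth m, this]
  have hsum_u : ∑ i, u i = (lam B).toReal := by
    simpa [measureReal_def] using (hquad 1 (by simp)).symm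
  calc ∑ i, |w i| = ∑ i, u i * |g (X i)| := by
        simp only [hw, abs_mul, abs_of_pos (hu _), hg_def, mul_comm (m _)]
    _ ≤ √(∑ i, u i) * √(∑ i, u i * g (X i) ^ 2) :=
        sum_mul_abs_le_sqrt_mul_sqrt (fun i => (hu i).le) _
    _ ≤ _ := by rw [hsum_u, hquad_g]; gcongr

/-- Corollary (second bound): if `Ω ⊆ B`, `dμ = ω dx`, `dλ = σ dx` with
`ω ∈ L¹(Ω)`, `σ ∈ L¹(B)` and `ω²/σ ∈ L¹(Ω)`, then
`‖w‖₁ ≤ √(λ(B)) · √(∫_Ω ω²/σ dx)`. -/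
theorem cheap_rule_density_bound {d n M N : ℕ} (hMN : N ≤ M)
    (hN : N = Nat.choose (n + d) d)
    (Ω B : Set (Fin d → ℝ)) (hΩB : Ω ⊆ B)
    (hΩmeas : MeasurableSet Ω) (hBmeas : MeasurableSet B)
    (ω σ : (Fin d → ℝ) → ℝ) (hωmeas : Measurable ω) (hσmeas : Measurable σ)
    (hωnn : ∀ x, 0 ≤ ω x) (hσnn : ∀ x, 0 ≤ σ x)
    (hωL1 : IntegrableOn ω Ω) (hσL1 : IntegrableOn σ B)
    (hratio : IntegrableOn (fun x => ω x ^ 2 / σ x) Ω)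
    (hσ0 : ∀ᵐ x ∂(volume.restrict Ω), ω x ≠ 0 → σ x ≠ 0)
    (μ lam : Measure (Fin d → ℝ))
    (hμ : μ = (volume.restrict Ω).withDensity fun x => ENNReal.ofReal (ω x))
    (hlam : lam = (volume.restrict B).withDensity fun x => ENNReal.ofReal (σ x))
    (p : Fin N → MvPolynomial (Fin d) ℝ)
    (hdeg : ∀ j, (p j).totalDegree ≤ n)
    (horth : ∀ h k, ∫ x in B, eval x (p h) * eval x (p k) ∂lam
      = if h = k then 1 else 0)
    (X : Fin M → (Fin d → ℝ)) (u : Fin M → ℝ)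
    (hX : ∀ i, X i ∈ B) (hu : ∀ i, 0 < u i)
    (hquad : ∀ q : MvPolynomial (Fin d) ℝ, q.totalDegree ≤ 2 * n →
      ∫ x in B, eval x q ∂lam = ∑ i, u i * eval (X i) q)
    (m : Fin N → ℝ) (hm : ∀ j, m j = ∫ x in Ω, eval x (p j) ∂μ)
    (w : Fin M → ℝ) (hw : ∀ i, w i = u i * ∑ j, eval (X i) (p j) * m j) :
    ∑ i, |w i| ≤ Real.sqrt (lam B).toReal *
      Real.sqrt (∫ x in Ω, ω x ^ 2 / σ x) :=
  cheap_rule_density_bound_general Ω B hΩB hΩmeas ω σ hωmeas hσmeas hωnn hσnn hratio hσ0 μ lam hμ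
    hlam p hdeg horth X u hu hquad m hm w hw
end
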